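/- arXiv:2508.21776 — 5 statements merged into one kernel-verified Lean document; each statement's English description precedes it below -/
import Mathlib

section
/- Let F be a field and D, N natural numbers. Let (V_i)_{i∈ℕ} be a family of F-vector spaces together with linear maps f_{ij} : V_i → V_j for all i ≤ j forming a directed system (f_{ii} = id and f_{jk} ∘ f_{ij} = f_{ik} for i ≤ j ≤ k). If dim_F V_i ≤ D for every i ≥ N, then the dimension of the direct limit lim→ V_i is at most D; in particular the direct limit is finite-dimensional. -/
/-- If a directed system of `F`-vector spaces indexed by `ℕ` has all dimensions bounded by `D`
from index `N` on, then its direct limit has dimension at most `D`; in particular it is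
finite-dimensional. -/
theorem stmt_0 (F : Type*) [Field F] (D N : ℕ)
    (V : ℕ → Type*) [∀ i, AddCommGroup (V i)] [∀ i, Module F (V i)]
    (f : ∀ i j : ℕ, i ≤ j → V i →ₗ[F] V j)
    [DirectedSystem V (fun i j h => f i j h)]
    (hdim : ∀ i, N ≤ i → Module.rank F (V i) ≤ D) :
    Module.rank F (Module.DirectLimit V f) ≤ D ∧
      FiniteDimensional F (Module.DirectLimit V f) := by
  have hrank : Module.rank F (Module.DirectLimit V f) ≤ D := by
    apply rank_le
    intro s hs
    choose ind pre hpre using fun x : s =>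
      Module.DirectLimit.exists_of (G := V) (f := f) (x : Module.DirectLimit V f)
    set j : ℕ := max N (s.attach.sup fun x => ind x) with hj
    have hNj : N ≤ j := le_max_left _ _
    have hij : ∀ x : s, ind x ≤ j := fun x =>
      le_trans (Finset.le_sup (Finset.mem_attach s x)) (le_max_right _ _)
    set y : s → V j := fun x => f (ind x) j (hij x) (pre x) with hy
    have hyof : ∀ x : s, Module.DirectLimit.of F ℕ V f j (y x) = (x : Module.DirectLimit V f) := by
      intro x
      rw [hy]
      simp only
      rw [Module.DirectLimit.of_f, hpre]
    have hli : LinearIndependent F y := by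
      apply LinearIndependent.of_comp (Module.DirectLimit.of F ℕ V f j)
      have : (Module.DirectLimit.of F ℕ V f j) ∘ y = fun x : s => (x : Module.DirectLimit V f) :=
        funext hyof
      rw [this]
      exact hs
    have hcard := hli.cardinal_lift_le_rank
    have h1 : Cardinal.mk s = (s.card : Cardinal) := Cardinal.mk_coe_finset
    rw [h1, Cardinal.lift_natCast] at hcard
    have h3 := Cardinal.lift_le.2 (hdim j hNj)
    rw [Cardinal.lift_natCast] at h3
    exact_mod_cast hcard.trans h3
  refine ⟨hrank, ?_⟩
  have : Module.rank F (Module.DirectLimit V f) < Cardinal.aleph0 :=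
    lt_of_le_of_lt hrank (Cardinal.nat_lt_aleph0 D)
  exact Module.rank_lt_aleph0_iff.1 this
end

section
/- In the cable algebra 𝒜ₙ, for every 1 ≤ k ≤ n−1 the identity a_k · a_0^{k−1} = 𝐔^{k(k−1)/2} · a_1^k holds. -/
/-- Variables of the cable algebra `𝒜ₙ`: `U₁,…,Uₙ`, `V₁,…,Vₙ`, `𝐔`, `a₀,…,a_{n−1}`. -/
inductive CableVar (n : ℕ) : Type
  | U : Fin n → CableVar n
  | V : Fin n → CableVar n
  | UU : CableVar n
  | a : Fin n → CableVar n

open MvPolynomial Finset in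
/-- The defining relations of the cable algebra `𝒜ₙ` over `𝔽 = ℤ/2ℤ`:
(i) `UᵢVᵢ = 𝐔`; (ii) `U_I·a_{k−1} = V_{Ī}·a_k` for `I` of cardinality `k`, `1 ≤ k ≤ n−1`;
(iii) `aᵢaⱼ = 𝐔^{kl−ij}·aₖaₗ` whenever `i + j = k + l` and `i ≤ k ≤ l ≤ j`. -/
def cableRelations (n : ℕ) : Set (MvPolynomial (CableVar n) (ZMod 2)) :=
  {p | ∃ i : Fin n, p = X (CableVar.U i) * X (CableVar.V i) - X CableVar.UU} ∪
  {p | ∃ (I : Finset (Fin n)) (h1 : 1 ≤ I.card) (h2 : I.card ≤ n - 1),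
      p = (∏ i ∈ I, X (CableVar.U i)) * X (CableVar.a ⟨I.card - 1, by omega⟩) -
        (∏ j ∈ Iᶜ, X (CableVar.V j)) * X (CableVar.a ⟨I.card, by omega⟩)} ∪
  {p | ∃ i j k l : Fin n, (i : ℕ) + (j : ℕ) = (k : ℕ) + (l : ℕ) ∧ i ≤ k ∧ k ≤ l ∧ l ≤ j ∧
      p = X (CableVar.a i) * X (CableVar.a j) -
        X CableVar.UU ^ ((k : ℕ) * (l : ℕ) - (i : ℕ) * (j : ℕ)) *
          (X (CableVar.a k) * X (CableVar.a l))}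

/-- The cable algebra `𝒜ₙ` over `𝔽 = ℤ/2ℤ`. -/
abbrev CableAlg (n : ℕ) : Type :=
  MvPolynomial (CableVar n) (ZMod 2) ⧸ Ideal.span (cableRelations n)

open MvPolynomial in
lemma cable_rel3 (n : ℕ) (i j k l : Fin n) (hsum : (i : ℕ) + (j : ℕ) = (k : ℕ) + (l : ℕ))
    (h1 : i ≤ k) (h2 : k ≤ l) (h3 : l ≤ j) :
    Ideal.Quotient.mk (Ideal.span (cableRelations n))
        (X (CableVar.a i) * X (CableVar.a j)) =
      Ideal.Quotient.mk (Ideal.span (cableRelations n))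
        (X CableVar.UU ^ ((k : ℕ) * (l : ℕ) - (i : ℕ) * (j : ℕ)) *
          (X (CableVar.a k) * X (CableVar.a l))) := by
  rw [Ideal.Quotient.eq]
  apply Ideal.subset_span
  exact Or.inr ⟨i, j, k, l, hsum, h1, h2, h3, rfl⟩

lemma cable_aux {R : Type*} [CommRing R] (N : ℕ) (u a0 a1 : R) (f : ℕ → R)
    (hf1 : f 1 = a1)
    (hstep : ∀ m, 1 ≤ m → m + 1 ≤ N → a0 * f (m + 1) = u ^ m * (a1 * f m)) :
    ∀ k, 1 ≤ k → k ≤ N → f k * a0 ^ (k - 1) = u ^ (k * (k - 1) / 2) * a1 ^ k := by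
  intro k
  induction k with
  | zero => omega
  | succ m ih =>
    intro h1 h2
    rcases Nat.eq_or_lt_of_le h1 with h | h
    · simp [← h, hf1]
    · obtain ⟨p, rfl⟩ : ∃ p, m = p + 1 := ⟨m - 1, by omega⟩
      have ih' := ih (by omega) (by omega)
      have hs := hstep (p + 1) (by omega) h2
      have hexp : (p + 1) + (p + 1) * p / 2 = (p + 2) * (p + 1) / 2 := by
        have h1 : (p + 2) * (p + 1) = (p + 1) * p + (p + 1) * 2 := by ring
        rw [h1, Nat.add_mul_div_right _ _ (by norm_num : (0:ℕ) < 2)]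
        exact (Nat.add_comm _ _)
      simp only [Nat.add_sub_cancel] at ih' ⊢
      calc f (p + 1 + 1) * a0 ^ (p + 1)
          = (a0 * f (p + 1 + 1)) * a0 ^ p := by ring
        _ = u ^ (p + 1) * (a1 * f (p + 1)) * a0 ^ p := by rw [hs]
        _ = u ^ (p + 1) * a1 * (f (p + 1) * a0 ^ p) := by ring
        _ = u ^ (p + 1) * a1 * (u ^ ((p + 1) * p / 2) * a1 ^ (p + 1)) := by rw [ih']
        _ = u ^ ((p + 1) + (p + 1) * p / 2) * a1 ^ (p + 1 + 1) := by rw [pow_add]; ring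
        _ = u ^ ((p + 1 + 1) * (p + 1) / 2) * a1 ^ (p + 1 + 1) := by rw [hexp]

/-- In the cable algebra `𝒜ₙ`, for every `1 ≤ k ≤ n−1` one has
`a_k · a_0^{k−1} = 𝐔^{k(k−1)/2} · a_1^k`. -/
theorem stmt_9 (n k : ℕ) (hk1 : 1 ≤ k) (hk2 : k ≤ n - 1) :
    Ideal.Quotient.mk (Ideal.span (cableRelations n))
          (MvPolynomial.X (CableVar.a ⟨k, by omega⟩)) *
        (Ideal.Quotient.mk (Ideal.span (cableRelations n))
            (MvPolynomial.X (CableVar.a ⟨0, by omega⟩))) ^ (k - 1) =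
      (Ideal.Quotient.mk (Ideal.span (cableRelations n))
            (MvPolynomial.X CableVar.UU)) ^ (k * (k - 1) / 2) *
        (Ideal.Quotient.mk (Ideal.span (cableRelations n))
            (MvPolynomial.X (CableVar.a ⟨1, by omega⟩))) ^ k := by
  classical
  have hn : 1 < n := by omega
  set mk0 := Ideal.Quotient.mk (Ideal.span (cableRelations n)) with hmk
  set f : ℕ → CableAlg n := fun m =>
    if h : m < n then mk0 (MvPolynomial.X (CableVar.a ⟨m, h⟩)) else 0 with hf
  have hfk : ∀ m (h : m < n), f m = mk0 (MvPolynomial.X (CableVar.a ⟨m, h⟩)) := by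
    intro m h; simp [hf, h]
  have hstep : ∀ m, 1 ≤ m → m + 1 ≤ n - 1 →
      f 0 * f (m + 1) = mk0 (MvPolynomial.X CableVar.UU) ^ m *
        (f 1 * f m) := by
    intro m hm1 hm2
    rw [hfk 0 (by omega), hfk (m + 1) (by omega), hfk 1 (by omega), hfk m (by omega)]
    have key := cable_rel3 n ⟨0, by omega⟩ ⟨m + 1, by omega⟩ ⟨1, by omega⟩ ⟨m, by omega⟩
      (by simp; omega) (by simp [Fin.le_def]) (by simp [Fin.le_def]; omega) (by simp [Fin.le_def])
    simp only [map_mul, map_pow] at key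
    have e0 : 1 * m - 0 * (m + 1) = m := by omega
    rw [e0] at key
    exact key
  have main := cable_aux (n - 1) (mk0 (MvPolynomial.X CableVar.UU)) (f 0) (f 1) f rfl hstep
    k hk1 hk2
  rw [hfk k (by omega), hfk 0 (by omega), hfk 1 (by omega)] at main
  exact main
end

section
/- Let 𝔽 = ℤ/2ℤ and n ≥ 1. There is an 𝔽-algebra isomorphism from the localization of the cable algebra 𝒜ₙ at the multiplicative set of powers of a_0 to the Laurent polynomial ring 𝒜ₙ^col[T, T^{−1}] over the colored algebra 𝒜ₙ^col, which sends U_i to U_i, V_i to V_i, 𝐔 to 𝖠·∏_{j=1}^n V_j, and a_k to (𝖠·∏_{j=1}^n V_j)^{k(k−1)/2} · 𝖠^k · T for 0 ≤ k ≤ n−1; in particular a_0 is sent to T. -/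
set_option maxHeartbeats 1000000
set_option synthInstance.maxHeartbeats 400000


/-- The class of the variable `v` in the cable algebra `𝒜ₙ`. -/
noncomputable def cableGen (n : ℕ) (v : CableVar n) : CableAlg n :=
  Ideal.Quotient.mk (Ideal.span (cableRelations n)) (MvPolynomial.X v)

/-- Variables of the colored algebra `𝒜ₙ^col`: `U₁,…,Uₙ`, `V₁,…,Vₙ`, `𝖠`. -/
inductive ColVar (n : ℕ) : Type
  | U : Fin n → ColVar n
  | V : Fin n → ColVar n
  | A : ColVar n

open MvPolynomial Finset in
/-- The defining relations `Uᵢ = 𝖠·∏_{j≠i}Vⱼ` of the colored algebra `𝒜ₙ^col` over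
`𝔽 = ℤ/2ℤ`. -/
def colRelations (n : ℕ) : Set (MvPolynomial (ColVar n) (ZMod 2)) :=
  {p | ∃ i : Fin n, p = X (ColVar.U i) -
    X ColVar.A * ∏ j ∈ Finset.univ.erase i, X (ColVar.V j)}

/-- The colored algebra `𝒜ₙ^col` over `𝔽 = ℤ/2ℤ`. -/
abbrev ColAlg (n : ℕ) : Type :=
  MvPolynomial (ColVar n) (ZMod 2) ⧸ Ideal.span (colRelations n)

/-- The class of the variable `v` in the colored algebra `𝒜ₙ^col`. -/
noncomputable def colGen (n : ℕ) (v : ColVar n) : ColAlg n :=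
  Ideal.Quotient.mk (Ideal.span (colRelations n)) (MvPolynomial.X v)

namespace Stmt12Aux

open MvPolynomial LaurentPolynomial Finset
local notation "LC" => LaurentPolynomial.C

/-! ### Numerical lemmas -/

lemma two_dvd_mul_pred (x : ℕ) : 2 ∣ x * (x - 1) := by
  rcases Nat.even_or_odd x with ⟨k, hk⟩ | ⟨k, hk⟩
  · exact Dvd.dvd.mul_right ⟨k, by omega⟩ _
  · exact Dvd.dvd.mul_left ⟨k, by omega⟩ _

lemma csum (x d : ℕ) : (x + d) * (x + d - 1) / 2 = x * (x - 1) / 2 + x * d + d * (d - 1) / 2 := by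
  have key : (x + d) * (x + d - 1) = x * (x - 1) + 2 * (x * d) + d * (d - 1) := by
    rcases x with _ | x
    · simp
    · rcases d with _ | d
      · simp
      · simp only [Nat.succ_sub_one, show x + 1 + (d + 1) - 1 = x + 1 + d from rfl]
        ring
  obtain ⟨a, ha⟩ := two_dvd_mul_pred x
  obtain ⟨b, hb⟩ := two_dvd_mul_pred d
  obtain ⟨c, hc⟩ := two_dvd_mul_pred (x + d)
  rw [ha, hb, hc] at key ⊢
  generalize x * d = m at key ⊢
  omega

lemma arith2 (k : ℕ) (h : 1 ≤ k) :
    k * (k - 1) / 2 = (k - 1) * (k - 1 - 1) / 2 + (k - 1) := by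
  have h2 := csum (k - 1) 1
  have e : k - 1 + 1 = k := by omega
  rw [e] at h2
  simpa using h2

lemma arith3 (i j k l : ℕ) (hsum : i + j = k + l) (h1 : i ≤ k) (h2 : k ≤ l) (h3 : l ≤ j) :
    i * (i - 1) / 2 + j * (j - 1) / 2 =
      k * l - i * j + (k * (k - 1) / 2 + l * (l - 1) / 2) := by
  obtain ⟨d, rfl⟩ : ∃ d, k = i + d := ⟨k - i, by omega⟩
  obtain rfl : j = l + d := by omega
  rw [csum l d, csum i d]
  have e1 : (i + d) * l = i * l + d * l := by ring
  have e2 : i * (l + d) = i * l + i * d := by ring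
  have e3 : i * d ≤ l * d := Nat.mul_le_mul_right _ (by omega)
  have e4 : l * d = d * l := Nat.mul_comm _ _
  rw [e1, e2]
  generalize i * (i - 1) / 2 = A at *
  generalize l * (l - 1) / 2 = B at *
  generalize d * (d - 1) / 2 = C at *
  generalize i * l = P at *
  generalize i * d = S at *
  generalize l * d = Q at *
  generalize d * l = Q' at *
  omega


/-! ### Relations in the quotient algebras -/

variable (n : ℕ)

lemma mk_rel_cable {p : MvPolynomial (CableVar n) (ZMod 2)} (hp : p ∈ cableRelations n) :
    Ideal.Quotient.mk (Ideal.span (cableRelations n)) p = 0 :=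
  Ideal.Quotient.eq_zero_iff_mem.2 (Ideal.subset_span hp)

lemma cab_i (i : Fin n) :
    cableGen n (CableVar.U i) * cableGen n (CableVar.V i) = cableGen n CableVar.UU := by
  have h := mk_rel_cable n (Or.inl (Or.inl ⟨i, rfl⟩))
  rw [map_sub, map_mul, sub_eq_zero] at h
  exact h

lemma cab_ii (I : Finset (Fin n)) (h1 : 1 ≤ I.card) (h2 : I.card ≤ n - 1) :
    (∏ i ∈ I, cableGen n (CableVar.U i)) * cableGen n (CableVar.a ⟨I.card - 1, by omega⟩) =
      (∏ j ∈ Iᶜ, cableGen n (CableVar.V j)) * cableGen n (CableVar.a ⟨I.card, by omega⟩) := by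
  have h := mk_rel_cable n (Or.inl (Or.inr ⟨I, h1, h2, rfl⟩))
  rw [map_sub, map_mul, map_mul, map_prod, map_prod, sub_eq_zero] at h
  exact h

lemma cab_iii (i j k l : Fin n) (hsum : (i : ℕ) + (j : ℕ) = (k : ℕ) + (l : ℕ))
    (h1 : i ≤ k) (h2 : k ≤ l) (h3 : l ≤ j) :
    cableGen n (CableVar.a i) * cableGen n (CableVar.a j) =
      cableGen n CableVar.UU ^ ((k : ℕ) * (l : ℕ) - (i : ℕ) * (j : ℕ)) *
        (cableGen n (CableVar.a k) * cableGen n (CableVar.a l)) := by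
  have h := mk_rel_cable n (Or.inr ⟨i, j, k, l, hsum, h1, h2, h3, rfl⟩)
  rw [map_sub, map_mul, map_mul, map_mul, map_pow, sub_eq_zero] at h
  exact h

lemma col_U (i : Fin n) :
    colGen n (ColVar.U i) =
      colGen n ColVar.A * ∏ j ∈ univ.erase i, colGen n (ColVar.V j) := by
  have h : Ideal.Quotient.mk (Ideal.span (colRelations n))
      (X (ColVar.U i) - X ColVar.A * ∏ j ∈ univ.erase i, X (ColVar.V j)) = 0 :=
    Ideal.Quotient.eq_zero_iff_mem.2 (Ideal.subset_span ⟨i, rfl⟩)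
  rw [map_sub, map_mul, map_prod, sub_eq_zero] at h
  exact h

/-! ### Derived identities in the cable algebra -/

lemma cab_ii' (hn : 1 ≤ n) (i : Fin n) (h2 : 2 ≤ n) :
    cableGen n (CableVar.U i) * cableGen n (CableVar.a ⟨0, hn⟩) =
      (∏ j ∈ univ.erase i, cableGen n (CableVar.V j)) * cableGen n (CableVar.a ⟨1, h2⟩) := by
  have h := cab_ii n {i} (by simp) (by simp; omega)
  simp only [card_singleton, prod_singleton, compl_singleton] at h
  exact h

lemma UUa0 (hn : 1 ≤ n) (h2 : 2 ≤ n) :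
    cableGen n CableVar.UU * cableGen n (CableVar.a ⟨0, hn⟩) =
      (∏ j : Fin n, cableGen n (CableVar.V j)) * cableGen n (CableVar.a ⟨1, h2⟩) := by
  rw [← cab_i n ⟨0, hn⟩, mul_comm (cableGen n (CableVar.U ⟨0, hn⟩)), mul_assoc,
    cab_ii' n hn ⟨0, hn⟩ h2, ← mul_assoc, mul_prod_erase univ (fun j => cableGen n (CableVar.V j)) (mem_univ (⟨0, hn⟩ : Fin n))]

lemma a_rec (hn : 1 ≤ n) (k : ℕ) (hk2 : 2 ≤ k) (hk : k < n) :
    cableGen n (CableVar.a ⟨0, hn⟩) * cableGen n (CableVar.a ⟨k, hk⟩) =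
      cableGen n CableVar.UU ^ (k - 1) *
        (cableGen n (CableVar.a ⟨1, by omega⟩) * cableGen n (CableVar.a ⟨k - 1, by omega⟩)) := by
  have h := cab_iii n ⟨0, hn⟩ ⟨k, hk⟩ ⟨1, by omega⟩ ⟨k - 1, by omega⟩
    (show 0 + k = 1 + (k - 1) by omega)
    (show (⟨0, hn⟩ : Fin n) ≤ ⟨1, by omega⟩ by rw [Fin.mk_le_mk]; omega)
    (show (⟨1, by omega⟩ : Fin n) ≤ ⟨k - 1, by omega⟩ by rw [Fin.mk_le_mk]; omega)
    (show (⟨k - 1, by omega⟩ : Fin n) ≤ ⟨k, hk⟩ by rw [Fin.mk_le_mk]; omega)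
  have e : 1 * (k - 1) - 0 * k = k - 1 := by omega
  rw [show ((⟨0, hn⟩ : Fin n) : ℕ) = 0 from rfl, show ((⟨k, hk⟩ : Fin n) : ℕ) = k from rfl,
    show ((⟨1, by omega⟩ : Fin n) : ℕ) = 1 from rfl,
    show ((⟨k - 1, by omega⟩ : Fin n) : ℕ) = k - 1 from rfl, e] at h
  exact h

lemma a_closed (hn : 1 ≤ n) :
    ∀ k (_ : 1 ≤ k) (hk : k < n),
      cableGen n (CableVar.a ⟨k, hk⟩) * cableGen n (CableVar.a ⟨0, hn⟩) ^ (k - 1) =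
        cableGen n CableVar.UU ^ (k * (k - 1) / 2) *
          cableGen n (CableVar.a ⟨1, by omega⟩) ^ k := by
  intro k
  induction k with
  | zero => omega
  | succ m ih =>
    intro _ hk
    rcases Nat.eq_zero_or_pos m with rfl | hm
    · simp
    have hmn : m < n := by omega
    have hn2 : 2 ≤ n := by omega
    have step : cableGen n (CableVar.a ⟨0, hn⟩) * cableGen n (CableVar.a ⟨m + 1, hk⟩) =
        cableGen n CableVar.UU ^ m *
          (cableGen n (CableVar.a ⟨1, hn2⟩) * cableGen n (CableVar.a ⟨m, hmn⟩)) :=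
      a_rec n hn (m + 1) (by omega) hk
    have ihm := ih hm hmn
    show cableGen n (CableVar.a ⟨m + 1, hk⟩) * cableGen n (CableVar.a ⟨0, hn⟩) ^ m =
      cableGen n CableVar.UU ^ ((m + 1) * m / 2) * cableGen n (CableVar.a ⟨1, hn2⟩) ^ (m + 1)
    calc cableGen n (CableVar.a ⟨m + 1, hk⟩) * cableGen n (CableVar.a ⟨0, hn⟩) ^ m
        = (cableGen n (CableVar.a ⟨0, hn⟩) * cableGen n (CableVar.a ⟨m + 1, hk⟩)) *
            cableGen n (CableVar.a ⟨0, hn⟩) ^ (m - 1) := by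
          have e : m = (m - 1) + 1 := by omega
          have hpow : cableGen n (CableVar.a ⟨0, hn⟩) ^ m =
              cableGen n (CableVar.a ⟨0, hn⟩) ^ (m - 1) * cableGen n (CableVar.a ⟨0, hn⟩) := by
            conv_lhs => rw [e]
            rw [pow_succ]
          rw [hpow]
          ring
      _ = cableGen n CableVar.UU ^ m * cableGen n (CableVar.a ⟨1, hn2⟩) *
            (cableGen n (CableVar.a ⟨m, hmn⟩) * cableGen n (CableVar.a ⟨0, hn⟩) ^ (m - 1)) := by
          rw [step]; ring
      _ = cableGen n CableVar.UU ^ m * cableGen n (CableVar.a ⟨1, hn2⟩) *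
            (cableGen n CableVar.UU ^ (m * (m - 1) / 2) *
              cableGen n (CableVar.a ⟨1, hn2⟩) ^ m) := by rw [ihm]
      _ = cableGen n CableVar.UU ^ (m + m * (m - 1) / 2) *
            cableGen n (CableVar.a ⟨1, hn2⟩) ^ (m + 1) := by
          rw [pow_add, pow_succ]; ring
      _ = cableGen n CableVar.UU ^ ((m + 1) * m / 2) *
            cableGen n (CableVar.a ⟨1, hn2⟩) ^ (m + 1) := by
          have h2 := arith2 (m + 1) (by omega)
          simp only [Nat.add_sub_cancel] at h2
          rw [h2, add_comm (m * (m - 1) / 2) m]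


/-! ### Product identity in the colored algebra -/

lemma col_prod_erase (I : Finset (Fin n)) :
    (∏ i ∈ I, ∏ j ∈ univ.erase i, colGen n (ColVar.V j)) =
      (∏ j ∈ I, colGen n (ColVar.V j)) ^ (I.card - 1) *
        (∏ j ∈ Iᶜ, colGen n (ColVar.V j)) ^ I.card := by
  have hsplit : ∀ i ∈ I, (∏ j ∈ univ.erase i, colGen n (ColVar.V j)) =
      (∏ j ∈ I.erase i, colGen n (ColVar.V j)) * ∏ j ∈ Iᶜ, colGen n (ColVar.V j) := by
    intro i hi
    rw [← prod_union (by simp [Finset.disjoint_left])]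
    refine (prod_congr ?_ (fun _ _ => rfl)).symm
    ext j
    simp only [mem_union, mem_erase, mem_compl, mem_univ, and_true]
    constructor
    · rintro (⟨hji, _⟩ | hj)
      · exact hji
      · intro h; exact hj (h ▸ hi)
    · intro hj
      by_cases hI : j ∈ I
      · exact Or.inl ⟨hj, hI⟩
      · exact Or.inr hI
  calc ∏ i ∈ I, ∏ j ∈ univ.erase i, colGen n (ColVar.V j)
      = ∏ i ∈ I, ((∏ j ∈ I.erase i, colGen n (ColVar.V j)) *
          ∏ j ∈ Iᶜ, colGen n (ColVar.V j)) := prod_congr rfl hsplit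
    _ = (∏ i ∈ I, ∏ j ∈ I.erase i, colGen n (ColVar.V j)) *
          (∏ j ∈ Iᶜ, colGen n (ColVar.V j)) ^ I.card := by
        rw [prod_mul_distrib, prod_const]
    _ = (∏ j ∈ I, colGen n (ColVar.V j)) ^ (I.card - 1) *
          (∏ j ∈ Iᶜ, colGen n (ColVar.V j)) ^ I.card := by
        congr 1
        rw [prod_comm' (s' := fun y => I.erase y) (t' := I) (fun x y => by
          simp only [mem_erase]
          constructor
          · rintro ⟨hx, hyx, hy⟩
            exact ⟨⟨hyx.symm, hx⟩, hy⟩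
          · rintro ⟨⟨hxy, hx⟩, hy⟩
            exact ⟨hx, hxy.symm, hy⟩)]
        rw [← prod_pow]
        refine prod_congr rfl fun j hj => ?_
        rw [prod_const, card_erase_of_mem hj]

/-! ### The forward homomorphism -/

noncomputable def gfun : CableVar n → LaurentPolynomial (ColAlg n)
  | .U i => LC (colGen n (ColVar.U i))
  | .V i => LC (colGen n (ColVar.V i))
  | .UU => LC (colGen n ColVar.A * ∏ j : Fin n, colGen n (ColVar.V j))
  | .a k => LC ((colGen n ColVar.A * ∏ j : Fin n, colGen n (ColVar.V j)) ^
        ((k : ℕ) * ((k : ℕ) - 1) / 2) * colGen n ColVar.A ^ (k : ℕ)) * T 1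

noncomputable def ψr : MvPolynomial (CableVar n) (ZMod 2) →+* LaurentPolynomial (ColAlg n) :=
  (aeval (gfun n)).toRingHom

lemma ψr_X (v : CableVar n) : ψr n (X v) = gfun n v := by
  simp [ψr]

lemma ψr_rel : ∀ p ∈ cableRelations n, ψr n p = 0 := by
  rintro p hp
  rcases hp with (⟨i, rfl⟩ | ⟨I, h1, h2, rfl⟩) | ⟨i, j, k, l, hsum, hik, hkl, hlj, rfl⟩
  · rw [map_sub, map_mul, ψr_X, ψr_X, ψr_X, sub_eq_zero]
    dsimp only [gfun]
    rw [← map_mul]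
    congr 1
    rw [col_U n i, mul_assoc,
      prod_erase_mul univ (fun j => colGen n (ColVar.V j)) (mem_univ i)]
  · rw [map_sub, map_mul, map_mul, map_prod, map_prod, sub_eq_zero]
    simp only [ψr_X]
    dsimp only [gfun]
    conv_lhs => rw [← map_prod, ← mul_assoc, ← map_mul]
    conv_rhs => rw [← map_prod, ← mul_assoc, ← map_mul]
    congr 2
    have hU : ∏ i ∈ I, colGen n (ColVar.U i) =
        colGen n ColVar.A ^ I.card *
          ((∏ j ∈ I, colGen n (ColVar.V j)) ^ (I.card - 1) *
            (∏ j ∈ Iᶜ, colGen n (ColVar.V j)) ^ I.card) := by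
      rw [prod_congr rfl (fun i _ => col_U n i), prod_mul_distrib, prod_const, col_prod_erase]
    rw [hU, arith2 I.card h1, pow_add,
      ← prod_mul_prod_compl I (fun j => colGen n (ColVar.V j))]
    obtain ⟨m, hm⟩ : ∃ m, I.card = m + 1 := ⟨I.card - 1, by omega⟩
    rw [hm]
    simp only [Nat.add_sub_cancel]
    ring
  · rw [map_sub, map_mul, map_mul, map_mul, map_pow, ψr_X, ψr_X, ψr_X, ψr_X, ψr_X,
      sub_eq_zero]
    dsimp only [gfun]
    have h3 : (i : ℕ) * ((i : ℕ) - 1) / 2 + (j : ℕ) * ((j : ℕ) - 1) / 2 =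
        (k : ℕ) * (l : ℕ) - (i : ℕ) * (j : ℕ) +
          ((k : ℕ) * ((k : ℕ) - 1) / 2 + (l : ℕ) * ((l : ℕ) - 1) / 2) :=
      arith3 _ _ _ _ hsum hik hkl hlj
    have hco : ((colGen n ColVar.A * ∏ j : Fin n, colGen n (ColVar.V j)) ^
          ((i : ℕ) * ((i : ℕ) - 1) / 2) * colGen n ColVar.A ^ (i : ℕ)) *
        ((colGen n ColVar.A * ∏ j : Fin n, colGen n (ColVar.V j)) ^
          ((j : ℕ) * ((j : ℕ) - 1) / 2) * colGen n ColVar.A ^ (j : ℕ)) =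
        (colGen n ColVar.A * ∏ j : Fin n, colGen n (ColVar.V j)) ^
            ((k : ℕ) * (l : ℕ) - (i : ℕ) * (j : ℕ)) *
          (((colGen n ColVar.A * ∏ j : Fin n, colGen n (ColVar.V j)) ^
              ((k : ℕ) * ((k : ℕ) - 1) / 2) * colGen n ColVar.A ^ (k : ℕ)) *
            ((colGen n ColVar.A * ∏ j : Fin n, colGen n (ColVar.V j)) ^
              ((l : ℕ) * ((l : ℕ) - 1) / 2) * colGen n ColVar.A ^ (l : ℕ))) := by
      calc ((colGen n ColVar.A * ∏ j : Fin n, colGen n (ColVar.V j)) ^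
            ((i : ℕ) * ((i : ℕ) - 1) / 2) * colGen n ColVar.A ^ (i : ℕ)) *
          ((colGen n ColVar.A * ∏ j : Fin n, colGen n (ColVar.V j)) ^
            ((j : ℕ) * ((j : ℕ) - 1) / 2) * colGen n ColVar.A ^ (j : ℕ))
          = (colGen n ColVar.A * ∏ j : Fin n, colGen n (ColVar.V j)) ^
              ((i : ℕ) * ((i : ℕ) - 1) / 2 + (j : ℕ) * ((j : ℕ) - 1) / 2) *
              colGen n ColVar.A ^ ((i : ℕ) + (j : ℕ)) := by
            rw [pow_add, pow_add]; ring
        _ = (colGen n ColVar.A * ∏ j : Fin n, colGen n (ColVar.V j)) ^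
              ((k : ℕ) * (l : ℕ) - (i : ℕ) * (j : ℕ) +
                ((k : ℕ) * ((k : ℕ) - 1) / 2 + (l : ℕ) * ((l : ℕ) - 1) / 2)) *
              colGen n ColVar.A ^ ((k : ℕ) + (l : ℕ)) := by rw [h3, hsum]
        _ = _ := by
            rw [pow_add, pow_add, pow_add]; ring
    have hco' := congrArg LC hco
    simp only [map_mul, map_pow] at hco' ⊢
    linear_combination (T 1 * T 1 : LaurentPolynomial (ColAlg n)) * hco'


noncomputable def ψq : CableAlg n →+* LaurentPolynomial (ColAlg n) :=
  Ideal.Quotient.lift _ (ψr n) (fun p hp => by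
    have hle : Ideal.span (cableRelations n) ≤ RingHom.ker (ψr n) :=
      Ideal.span_le.2 fun q hq => RingHom.mem_ker.2 (ψr_rel n q hq)
    exact RingHom.mem_ker.1 (hle hp))

lemma ψq_gen (v : CableVar n) : ψq n (cableGen n v) = gfun n v := by
  rw [cableGen, ψq, Ideal.Quotient.lift_mk, ψr_X]

lemma gfun_a0 (hn : 1 ≤ n) : gfun n (CableVar.a ⟨0, hn⟩) = T 1 := by
  dsimp only [gfun]
  simp

lemma isUnit_ψq_a0 (hn : 1 ≤ n) : IsUnit (ψq n (cableGen n (CableVar.a ⟨0, hn⟩))) := by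
  rw [ψq_gen, gfun_a0]
  exact isUnit_T 1

abbrev Lc (hn : 1 ≤ n) : Type :=
  Localization (Submonoid.powers (cableGen n (CableVar.a ⟨0, hn⟩)))

noncomputable def ΦL (hn : 1 ≤ n) : Lc n hn →+* LaurentPolynomial (ColAlg n) :=
  IsLocalization.Away.lift (S := Lc n hn) (P := LaurentPolynomial (ColAlg n)) (g := ψq n) (cableGen n (CableVar.a ⟨0, hn⟩)) (isUnit_ψq_a0 n hn)

lemma ΦL_la (hn : 1 ≤ n) (x : CableAlg n) :
    ΦL n hn (algebraMap (CableAlg n) (Lc n hn) x) = ψq n x :=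
  by unfold ΦL; exact IsLocalization.Away.lift_eq _ _ x

/-! ### The backward homomorphism -/

noncomputable def u0 (hn : 1 ≤ n) : (Lc n hn)ˣ :=
  (IsLocalization.map_units (M := Submonoid.powers (cableGen n (CableVar.a ⟨0, hn⟩)))
    (Lc n hn) ⟨_, Submonoid.mem_powers _⟩).unit

lemma u0_val (hn : 1 ≤ n) : (u0 n hn : Lc n hn) =
    algebraMap (CableAlg n) (Lc n hn) (cableGen n (CableVar.a ⟨0, hn⟩)) :=
  IsUnit.unit_spec _

noncomputable def gcol (hn : 1 ≤ n) : ColVar n → Lc n hn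
  | .U i => algebraMap _ _ (cableGen n (CableVar.U i))
  | .V i => algebraMap _ _ (cableGen n (CableVar.V i))
  | .A =>
    if h : 2 ≤ n then
      algebraMap _ _ (cableGen n (CableVar.a ⟨1, h⟩)) * ↑(u0 n hn)⁻¹
    else algebraMap _ _ (cableGen n (CableVar.U ⟨0, hn⟩))

lemma gcol_U (hn : 1 ≤ n) (i : Fin n) :
    gcol n hn (ColVar.U i) = algebraMap _ _ (cableGen n (CableVar.U i)) := rfl

lemma gcol_V (hn : 1 ≤ n) (i : Fin n) :
    gcol n hn (ColVar.V i) = algebraMap _ _ (cableGen n (CableVar.V i)) := rfl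

noncomputable def χr (hn : 1 ≤ n) : MvPolynomial (ColVar n) (ZMod 2) →+* Lc n hn :=
  (aeval (gcol n hn)).toRingHom

lemma χr_X (hn : 1 ≤ n) (v : ColVar n) : χr n hn (X v) = gcol n hn v := by
  simp [χr]

lemma gcolA_rel (hn : 1 ≤ n) (i : Fin n) :
    algebraMap (CableAlg n) (Lc n hn) (cableGen n (CableVar.U i)) =
      gcol n hn ColVar.A *
        ∏ j ∈ univ.erase i, algebraMap (CableAlg n) (Lc n hn) (cableGen n (CableVar.V j)) := by
  by_cases h : 2 ≤ n
  · show _ = (if h' : 2 ≤ n then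
        algebraMap (CableAlg n) (Lc n hn) (cableGen n (CableVar.a ⟨1, h'⟩)) * ↑(u0 n hn)⁻¹
      else algebraMap _ _ (cableGen n (CableVar.U ⟨0, hn⟩))) * _
    rw [dif_pos h, mul_right_comm, Units.eq_mul_inv_iff_mul_eq, u0_val, ← map_mul,
      ← map_prod, ← map_mul]
    exact congrArg _ ((cab_ii' n hn i h).trans (mul_comm _ _))
  · show _ = (if h' : 2 ≤ n then
        algebraMap (CableAlg n) (Lc n hn) (cableGen n (CableVar.a ⟨1, h'⟩)) * ↑(u0 n hn)⁻¹
      else algebraMap _ _ (cableGen n (CableVar.U ⟨0, hn⟩))) * _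
    rw [dif_neg h]
    have hn1 : n = 1 := by omega
    subst hn1
    have he : univ.erase i = (∅ : Finset (Fin 1)) := by
      ext j
      simp [Subsingleton.elim j i]
    rw [he, prod_empty, mul_one, Subsingleton.elim i ⟨0, hn⟩]

lemma χr_rel (hn : 1 ≤ n) : ∀ p ∈ colRelations n, χr n hn p = 0 := by
  rintro p ⟨i, rfl⟩
  rw [map_sub, map_mul, map_prod, sub_eq_zero]
  simp only [χr_X, gcol_U, gcol_V]
  exact gcolA_rel n hn i

noncomputable def χq (hn : 1 ≤ n) : ColAlg n →+* Lc n hn :=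
  Ideal.Quotient.lift _ (χr n hn) (fun p hp => by
    have hle : Ideal.span (colRelations n) ≤ RingHom.ker (χr n hn) :=
      Ideal.span_le.2 fun q hq => RingHom.mem_ker.2 (χr_rel n hn q hq)
    exact RingHom.mem_ker.1 (hle hp))

lemma χq_gen (hn : 1 ≤ n) (v : ColVar n) : χq n hn (colGen n v) = gcol n hn v := by
  rw [colGen, χq, Ideal.Quotient.lift_mk, χr_X]

noncomputable def w (hn : 1 ≤ n) : Multiplicative ℤ →* Lc n hn :=
  (Units.coeHom _).comp (zpowersHom _ (u0 n hn))

noncomputable def χL (hn : 1 ≤ n) : LaurentPolynomial (ColAlg n) →+* Lc n hn :=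
  AddMonoidAlgebra.liftNCRingHom (χq n hn) (w n hn) (fun _ _ => Commute.all _ _)

lemma χL_single (hn : 1 ≤ n) (a : ℤ) (b : ColAlg n) :
    χL n hn (AddMonoidAlgebra.single a b) = χq n hn b * ↑(u0 n hn ^ a) := by
  have h0 : χL n hn (AddMonoidAlgebra.single a b) =
      AddMonoidAlgebra.liftNC (χq n hn).toAddMonoidHom (w n hn) (AddMonoidAlgebra.single a b) :=
    rfl
  rw [h0, AddMonoidAlgebra.liftNC_single]
  rfl

lemma χL_C (hn : 1 ≤ n) (b : ColAlg n) : χL n hn (LC b) = χq n hn b := by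
  rw [show (LC b : LaurentPolynomial (ColAlg n)) = AddMonoidAlgebra.single 0 b from rfl, χL_single]
  simp

lemma χL_T (hn : 1 ≤ n) (a : ℤ) : χL n hn (T a) = ↑(u0 n hn ^ a) := by
  rw [show (T a : LaurentPolynomial (ColAlg n)) = AddMonoidAlgebra.single a 1 from rfl, χL_single]
  simp


/-! ### Values of the two maps on generators -/

lemma ΦL_gen (hn : 1 ≤ n) (v : CableVar n) :
    ΦL n hn (algebraMap (CableAlg n) (Lc n hn) (cableGen n v)) = gfun n v := by
  rw [ΦL_la, ψq_gen]

lemma ΦL_u0 (hn : 1 ≤ n) : ΦL n hn ↑(u0 n hn) = T 1 := by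
  rw [u0_val, ΦL_gen, gfun_a0]

lemma ΦL_u0_inv (hn : 1 ≤ n) : ΦL n hn ↑(u0 n hn)⁻¹ = T (-1) := by
  have h1 : ΦL n hn ↑(u0 n hn)⁻¹ * ΦL n hn ↑(u0 n hn) = 1 := by
    rw [← map_mul, Units.inv_mul, map_one]
  calc ΦL n hn ↑(u0 n hn)⁻¹ = ΦL n hn ↑(u0 n hn)⁻¹ * (T 1 * T (-1)) := by
        rw [← T_add]
        simp
    _ = (ΦL n hn ↑(u0 n hn)⁻¹ * ΦL n hn ↑(u0 n hn)) * T (-1) := by rw [ΦL_u0]; ring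
    _ = T (-1) := by rw [h1, one_mul]

noncomputable def Tu : (LaurentPolynomial (ColAlg n))ˣ :=
  ⟨T 1, T (-1), by rw [← T_add]; simp, by rw [← T_add]; simp⟩

lemma Tu_zpow (z : ℤ) :
    ((Tu n ^ z : (LaurentPolynomial (ColAlg n))ˣ) : LaurentPolynomial (ColAlg n)) = T z := by
  have h : (Units.coeHom (LaurentPolynomial (ColAlg n))).comp (zpowersHom _ (Tu n)) =
      AddMonoidAlgebra.of (ColAlg n) ℤ := by
    apply MonoidHom.ext_mint
    show ((Tu n ^ ((Multiplicative.ofAdd (1 : ℤ)).toAdd) :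
        (LaurentPolynomial (ColAlg n))ˣ) : LaurentPolynomial (ColAlg n)) = _
    rw [AddMonoidAlgebra.of_apply]
    simp [Tu]
  have h2 := DFunLike.congr_fun h (Multiplicative.ofAdd z)
  simpa [AddMonoidAlgebra.of_apply] using h2

lemma ΦL_u0_zpow (hn : 1 ≤ n) (z : ℤ) : ΦL n hn ↑(u0 n hn ^ z) = T z := by
  have hmap : Units.map (ΦL n hn).toMonoidHom (u0 n hn) = Tu n :=
    Units.ext (by rw [Units.coe_map]; exact ΦL_u0 n hn)
  calc ΦL n hn ↑(u0 n hn ^ z) = ↑(Units.map (ΦL n hn).toMonoidHom (u0 n hn ^ z)) := by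
        rw [Units.coe_map]
        rfl
    _ = ↑((Units.map (ΦL n hn).toMonoidHom (u0 n hn)) ^ z) := by rw [map_zpow]
    _ = T z := by rw [hmap, Tu_zpow]

/-! ### The backward map on the images of the generators -/

lemma χq_AP (hn : 1 ≤ n) :
    χq n hn (colGen n ColVar.A * ∏ j : Fin n, colGen n (ColVar.V j)) =
      algebraMap (CableAlg n) (Lc n hn) (cableGen n CableVar.UU) := by
  rw [map_mul, map_prod]
  simp only [χq_gen, gcol_V]
  by_cases h : 2 ≤ n
  · show (if h' : 2 ≤ n then
        algebraMap (CableAlg n) (Lc n hn) (cableGen n (CableVar.a ⟨1, h'⟩)) * ↑(u0 n hn)⁻¹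
      else algebraMap _ _ (cableGen n (CableVar.U ⟨0, hn⟩))) * _ = _
    rw [dif_pos h, mul_right_comm, Units.mul_inv_eq_iff_eq_mul, u0_val, ← map_prod,
      ← map_mul, ← map_mul]
    exact congrArg _ ((mul_comm _ _).trans (UUa0 n hn h).symm)
  · show (if h' : 2 ≤ n then
        algebraMap (CableAlg n) (Lc n hn) (cableGen n (CableVar.a ⟨1, h'⟩)) * ↑(u0 n hn)⁻¹
      else algebraMap _ _ (cableGen n (CableVar.U ⟨0, hn⟩))) * _ = _
    rw [dif_neg h]
    have hn1 : n = 1 := by omega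
    subst hn1
    rw [show (∏ j : Fin 1, algebraMap (CableAlg 1) (Lc 1 hn) (cableGen 1 (CableVar.V j))) =
        algebraMap (CableAlg 1) (Lc 1 hn) (cableGen 1 (CableVar.V ⟨0, hn⟩)) by
      rw [Fin.prod_univ_one]
      exact congrArg (fun t => algebraMap (CableAlg 1) (Lc 1 hn) (cableGen 1 (CableVar.V t)))
        (Subsingleton.elim (0 : Fin 1) ⟨0, hn⟩)]
    rw [← map_mul, cab_i]

lemma χL_gfun (hn : 1 ≤ n) (v : CableVar n) :
    χL n hn (gfun n v) = algebraMap (CableAlg n) (Lc n hn) (cableGen n v) := by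
  cases v with
  | U i => rw [show gfun n (CableVar.U i) = LC (colGen n (ColVar.U i)) from rfl, χL_C, χq_gen,
      gcol_U]
  | V i => rw [show gfun n (CableVar.V i) = LC (colGen n (ColVar.V i)) from rfl, χL_C, χq_gen,
      gcol_V]
  | UU => rw [show gfun n CableVar.UU =
      LC (colGen n ColVar.A * ∏ j : Fin n, colGen n (ColVar.V j)) from rfl, χL_C, χq_AP]
  | a k =>
    rw [show gfun n (CableVar.a k) =
      LC ((colGen n ColVar.A * ∏ j : Fin n, colGen n (ColVar.V j)) ^
          ((k : ℕ) * ((k : ℕ) - 1) / 2) * colGen n ColVar.A ^ (k : ℕ)) * T 1 from rfl]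
    rw [map_mul, χL_C, χL_T, map_mul, map_pow, map_pow, χq_AP, χq_gen]
    rw [show ((u0 n hn ^ (1 : ℤ) : (Lc n hn)ˣ) : Lc n hn) = ↑(u0 n hn) by rw [zpow_one]]
    rcases Nat.eq_zero_or_pos (k : ℕ) with hk0 | hk1
    · have hk : k = ⟨0, hn⟩ := Fin.ext hk0
      subst hk
      simp [u0_val]
    · have h2 : 2 ≤ n := by have := k.isLt; omega
      rw [show gcol n hn ColVar.A =
          algebraMap (CableAlg n) (Lc n hn) (cableGen n (CableVar.a ⟨1, h2⟩)) * ↑(u0 n hn)⁻¹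
        from by rw [gcol, dif_pos h2]]
      have hcab : cableGen n (CableVar.a k) * cableGen n (CableVar.a ⟨0, hn⟩) ^ (k : ℕ) =
          cableGen n CableVar.UU ^ ((k : ℕ) * ((k : ℕ) - 1) / 2) *
            cableGen n (CableVar.a ⟨1, h2⟩) ^ (k : ℕ) * cableGen n (CableVar.a ⟨0, hn⟩) := by
        have hc := a_closed n hn (k : ℕ) hk1 k.isLt
        rw [Fin.eta] at hc
        calc cableGen n (CableVar.a k) * cableGen n (CableVar.a ⟨0, hn⟩) ^ (k : ℕ)
            = cableGen n (CableVar.a k) * cableGen n (CableVar.a ⟨0, hn⟩) ^ ((k : ℕ) - 1) *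
              cableGen n (CableVar.a ⟨0, hn⟩) := by
              have he : (k : ℕ) = ((k : ℕ) - 1) + 1 := by omega
              conv_lhs => rw [he]
              rw [pow_succ]
              ring
          _ = _ := by rw [hc]
      have hloc : algebraMap (CableAlg n) (Lc n hn) (cableGen n (CableVar.a k)) *
          (↑(u0 n hn) : Lc n hn) ^ (k : ℕ) =
          (algebraMap (CableAlg n) (Lc n hn) (cableGen n CableVar.UU)) ^
              ((k : ℕ) * ((k : ℕ) - 1) / 2) *
            (algebraMap (CableAlg n) (Lc n hn) (cableGen n (CableVar.a ⟨1, h2⟩))) ^ (k : ℕ) *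
            ↑(u0 n hn) := by
        rw [u0_val, ← map_pow, ← map_mul, ← map_pow, ← map_pow, ← map_mul, ← map_mul]
        exact congrArg _ hcab
      calc (algebraMap (CableAlg n) (Lc n hn) (cableGen n CableVar.UU)) ^
              ((k : ℕ) * ((k : ℕ) - 1) / 2) *
            (algebraMap (CableAlg n) (Lc n hn) (cableGen n (CableVar.a ⟨1, h2⟩)) *
              ↑(u0 n hn)⁻¹) ^ (k : ℕ) * ↑(u0 n hn)
          = (algebraMap (CableAlg n) (Lc n hn) (cableGen n CableVar.UU)) ^
                ((k : ℕ) * ((k : ℕ) - 1) / 2) *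
              (algebraMap (CableAlg n) (Lc n hn) (cableGen n (CableVar.a ⟨1, h2⟩))) ^ (k : ℕ) *
              ↑(u0 n hn) * ((↑(u0 n hn)⁻¹ : Lc n hn)) ^ (k : ℕ) := by
            rw [mul_pow]; ring
        _ = algebraMap (CableAlg n) (Lc n hn) (cableGen n (CableVar.a k)) *
              (↑(u0 n hn) : Lc n hn) ^ (k : ℕ) * ((↑(u0 n hn)⁻¹ : Lc n hn)) ^ (k : ℕ) := by
            rw [hloc]
        _ = algebraMap (CableAlg n) (Lc n hn) (cableGen n (CableVar.a k)) *
              ((↑(u0 n hn) : Lc n hn) * ↑(u0 n hn)⁻¹) ^ (k : ℕ) := by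
            rw [mul_pow]; ring
        _ = algebraMap (CableAlg n) (Lc n hn) (cableGen n (CableVar.a k)) := by
            rw [Units.mul_inv, one_pow, mul_one]

lemma ΦL_gcol (hn : 1 ≤ n) (v : ColVar n) :
    ΦL n hn (gcol n hn v) = LC (colGen n v) := by
  cases v with
  | U i => rw [gcol_U, ΦL_gen]; rfl
  | V i => rw [gcol_V, ΦL_gen]; rfl
  | A =>
    by_cases h : 2 ≤ n
    · rw [show gcol n hn ColVar.A =
          algebraMap (CableAlg n) (Lc n hn) (cableGen n (CableVar.a ⟨1, h⟩)) * ↑(u0 n hn)⁻¹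
        from by rw [gcol, dif_pos h]]
      rw [map_mul, ΦL_gen, ΦL_u0_inv]
      dsimp only [gfun]
      norm_num
    · rw [show gcol n hn ColVar.A =
          algebraMap (CableAlg n) (Lc n hn) (cableGen n (CableVar.U ⟨0, hn⟩))
        from by rw [gcol, dif_neg h]]
      rw [ΦL_gen]
      have hn1 : n = 1 := by omega
      subst hn1
      show LC (colGen 1 (ColVar.U ⟨0, hn⟩)) = _
      rw [col_U]
      have he : (univ.erase (⟨0, hn⟩ : Fin 1)) = ∅ := by
        ext j
        simp [Subsingleton.elim j (⟨0, hn⟩ : Fin 1)]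
      rw [he, prod_empty, mul_one]


/-! ### The two compositions -/

lemma comp_ΦχL (hn : 1 ≤ n) : (ΦL n hn).comp (χL n hn) = RingHom.id _ := by
  apply AddMonoidAlgebra.ringHom_ext
  · intro b
    show ΦL n hn (χL n hn (AddMonoidAlgebra.single 0 b)) = AddMonoidAlgebra.single 0 b
    rw [show (AddMonoidAlgebra.single (0 : ℤ) b : LaurentPolynomial (ColAlg n)) = LC b from rfl, χL_C]
    revert b
    have hext : (ΦL n hn).comp (χq n hn) =
        (LC : ColAlg n →+* LaurentPolynomial (ColAlg n)) := by
      apply Ideal.Quotient.ringHom_ext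
      apply MvPolynomial.ringHom_ext
      · intro r
        exact RingHom.congr_fun (Subsingleton.elim (α := ZMod 2 →+* LaurentPolynomial (ColAlg n))
          ((((ΦL n hn).comp (χq n hn)).comp (Ideal.Quotient.mk (Ideal.span (colRelations n)))).comp
            MvPolynomial.C)
          (((LC : ColAlg n →+* LaurentPolynomial (ColAlg n)).comp (Ideal.Quotient.mk (Ideal.span (colRelations n)))).comp MvPolynomial.C)) r
      · intro v
        show ΦL n hn (χq n hn (Ideal.Quotient.mk _ (X v))) = LC (Ideal.Quotient.mk _ (X v))
        rw [show Ideal.Quotient.mk (Ideal.span (colRelations n)) (X v) = colGen n v from rfl,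
          χq_gen, ΦL_gcol]
    intro b
    exact RingHom.congr_fun hext b
  · intro a
    show ΦL n hn (χL n hn (AddMonoidAlgebra.single a 1)) = AddMonoidAlgebra.single a 1
    rw [show (AddMonoidAlgebra.single a (1 : ColAlg n) : LaurentPolynomial (ColAlg n)) = T a from rfl,
      χL_T, ΦL_u0_zpow]

lemma comp_χΦL (hn : 1 ≤ n) : (χL n hn).comp (ΦL n hn) = RingHom.id _ := by
  refine IsLocalization.ringHom_ext (R := CableAlg n) (S := Lc n hn) (P := Lc n hn) (Submonoid.powers (cableGen n (CableVar.a ⟨0, hn⟩))) ?_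
  apply Ideal.Quotient.ringHom_ext
  apply MvPolynomial.ringHom_ext
  · intro r
    exact RingHom.congr_fun (Subsingleton.elim (α := ZMod 2 →+* Lc n hn)
      (((((χL n hn).comp (ΦL n hn)).comp (algebraMap (CableAlg n) (Lc n hn))).comp
        (Ideal.Quotient.mk (Ideal.span (cableRelations n)))).comp MvPolynomial.C)
      ((((RingHom.id (Lc n hn)).comp (algebraMap (CableAlg n) (Lc n hn))).comp
        (Ideal.Quotient.mk (Ideal.span (cableRelations n)))).comp MvPolynomial.C)) r
  · intro v
    show χL n hn (ΦL n hn (algebraMap (CableAlg n) (Lc n hn) (Ideal.Quotient.mk _ (X v)))) =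
      algebraMap (CableAlg n) (Lc n hn) (Ideal.Quotient.mk _ (X v))
    rw [show Ideal.Quotient.mk (Ideal.span (cableRelations n)) (X v) = cableGen n v from rfl,
      ΦL_gen, χL_gfun]

noncomputable def ΨRE (hn : 1 ≤ n) : Lc n hn ≃+* LaurentPolynomial (ColAlg n) :=
  RingEquiv.ofRingHom (ΦL n hn) (χL n hn) (comp_ΦχL n hn) (comp_χΦL n hn)

noncomputable def ΨAE (hn : 1 ≤ n) : Lc n hn ≃ₐ[ZMod 2] LaurentPolynomial (ColAlg n) :=
  AlgEquiv.ofRingEquiv (f := ΨRE n hn) (fun x => RingHom.congr_fun (RingHom.ext_zmod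
    ((ΨRE n hn).toRingHom.comp (algebraMap _ _)) (algebraMap (ZMod 2) _)) x)

lemma ΨAE_apply (hn : 1 ≤ n) (x : Lc n hn) : ΨAE n hn x = ΦL n hn x := rfl

end Stmt12Aux

open Stmt12Aux

/-- The localization of the cable algebra `𝒜ₙ` at the powers of `a₀` is isomorphic, as an
algebra over `𝔽 = ℤ/2ℤ`, to the Laurent polynomial ring `𝒜ₙ^col[T,T⁻¹]` over the colored
algebra, sending `Uᵢ ↦ Uᵢ`, `Vᵢ ↦ Vᵢ`, `𝐔 ↦ 𝖠·∏ⱼVⱼ`, and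
`a_k ↦ (𝖠·∏ⱼVⱼ)^{k(k−1)/2}·𝖠^k·T`; in particular `a₀ ↦ T`. -/
theorem stmt_12 (n : ℕ) (hn : 1 ≤ n) :
    ∃ φ : Localization (Submonoid.powers (cableGen n (CableVar.a ⟨0, hn⟩)))
        ≃ₐ[ZMod 2] LaurentPolynomial (ColAlg n),
      (∀ i : Fin n,
        φ (algebraMap (CableAlg n) _ (cableGen n (CableVar.U i))) =
          LaurentPolynomial.C (colGen n (ColVar.U i))) ∧
      (∀ i : Fin n,
        φ (algebraMap (CableAlg n) _ (cableGen n (CableVar.V i))) =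
          LaurentPolynomial.C (colGen n (ColVar.V i))) ∧
      φ (algebraMap (CableAlg n) _ (cableGen n CableVar.UU)) =
          LaurentPolynomial.C (colGen n ColVar.A * ∏ j : Fin n, colGen n (ColVar.V j)) ∧
      (∀ k : Fin n,
        φ (algebraMap (CableAlg n) _ (cableGen n (CableVar.a k))) =
          LaurentPolynomial.C
              ((colGen n ColVar.A * ∏ j : Fin n, colGen n (ColVar.V j)) ^
                  ((k : ℕ) * ((k : ℕ) - 1) / 2) *
                colGen n ColVar.A ^ (k : ℕ)) *
            LaurentPolynomial.T 1) := by
  refine ⟨ΨAE n hn, fun i => ?_, fun i => ?_, ?_, fun k => ?_⟩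
  · rw [ΨAE_apply, ΦL_gen]
    rfl
  · rw [ΨAE_apply, ΦL_gen]
    rfl
  · rw [ΨAE_apply, ΦL_gen]
    rfl
  · rw [ΨAE_apply, ΦL_gen]
    rfl
end

section
/- Let m ≥ 1 and a < b be natural numbers, S a finite set, and I : S → ℕ a function with I(s) ≤ b − a for all s ∈ S and Σ_{s∈S} I(s) = Σ_{i=a}^{b−1}(⌊i/m⌋ + 1). Then |{s ∈ S : I(s) ≥ 1}| + |{s ∈ S : I(s) ≥ 2}| ≥ ⌊(b−1)/m⌋ + 1. -/
/-- Counting estimate: if `I : S → ℕ` satisfies `I s ≤ b − a` on a finite set `S` and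
`Σ_{s∈S} I s = Σ_{i=a}^{b−1} (⌊i/m⌋ + 1)`, then
`#{s : I s ≥ 1} + #{s : I s ≥ 2} ≥ ⌊(b−1)/m⌋ + 1`. -/
theorem stmt_14 {α : Type*} (m a b : ℕ) (hm : 1 ≤ m) (hab : a < b)
    (S : Finset α) (I : α → ℕ)
    (hle : ∀ s ∈ S, I s ≤ b - a)
    (hsum : ∑ s ∈ S, I s = ∑ i ∈ Finset.Ico a b, (i / m + 1)) :
    (S.filter fun s => 1 ≤ I s).card + (S.filter fun s => 2 ≤ I s).card ≥ (b - 1) / m + 1 := by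
  by_cases hb1 : b = a + 1
  · -- n = 1 case
    subst hb1
    have h1 : ∑ s ∈ S, I s ≤ (S.filter fun s => 1 ≤ I s).card := by
      have hpw : ∀ s ∈ S, I s ≤ if 1 ≤ I s then 1 else 0 := by
        intro s hs
        have := hle s hs
        split_ifs <;> omega
      calc ∑ s ∈ S, I s ≤ ∑ s ∈ S, (if 1 ≤ I s then 1 else 0) :=
            Finset.sum_le_sum hpw
        _ = (S.filter fun s => 1 ≤ I s).card := by
            rw [Finset.sum_boole]; simp
    have h2 : ∑ i ∈ Finset.Ico a (a+1), (i / m + 1) = a / m + 1 := by simp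
    have h3 : a + 1 - 1 = a := by omega
    rw [h3]
    omega
  -- main case: b ≥ a + 2
  obtain ⟨k, rfl⟩ : ∃ k, b = a + k + 2 := ⟨b - a - 2, by omega⟩
  by_contra hcon
  push_neg at hcon
  set a1 := (S.filter fun s => 1 ≤ I s).card with ha1
  set a2 := (S.filter fun s => 2 ≤ I s).card with ha2
  set q := (a + k + 2 - 1) / m with hqdef
  have hq : a1 + a2 ≤ q := by omega
  have ha21 : a2 ≤ a1 := by
    apply Finset.card_le_card
    intro x hx
    simp only [Finset.mem_filter] at hx ⊢
    exact ⟨hx.1, by omega⟩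
  set T := ∑ i ∈ Finset.Ico a (a + k + 2), (i / m + 1) with hT
  -- Fact A : T ≤ a1 + (k+1) * a2
  have hA : T ≤ a1 + (k + 1) * a2 := by
    rw [← hsum]
    have hpw : ∀ s ∈ S, I s ≤
        (if 1 ≤ I s then 1 else 0) + (k + 1) * (if 2 ≤ I s then 1 else 0) := by
      intro s hs
      have := hle s hs
      have hb : a + k + 2 - a = k + 2 := by omega
      rw [hb] at this
      split_ifs <;> omega
    calc ∑ s ∈ S, I s
        ≤ ∑ s ∈ S, ((if 1 ≤ I s then 1 else 0) + (k + 1) * (if 2 ≤ I s then 1 else 0)) :=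
          Finset.sum_le_sum hpw
      _ = a1 + (k + 1) * a2 := by
          rw [Finset.sum_add_distrib, ← Finset.mul_sum, Finset.sum_boole, Finset.sum_boole]
          simp [ha1, ha2]
  -- Fact: 2T ≤ (k+2) * (a1 + a2)
  have hF1 : 2 * T ≤ (k + 2) * (a1 + a2) := by
    have h1 : k * a2 ≤ k * a1 := Nat.mul_le_mul_left k ha21
    have h2 : (k + 1) * a2 = k * a2 + a2 := by ring
    have h3 : (k + 2) * (a1 + a2) = k * a1 + k * a2 + 2 * a1 + 2 * a2 := by ring
    omega
  -- pointwise: i + 1 ≤ m * (i/m + 1)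
  have hB : ∑ i ∈ Finset.Ico a (a + k + 2), (i + 1) ≤ m * T := by
    rw [hT, Finset.mul_sum]
    apply Finset.sum_le_sum
    intro i _
    have h1 := Nat.div_add_mod i m
    have h2 := Nat.mod_lt i (show 0 < m by omega)
    have h3 : m * (i / m + 1) = m * (i / m) + m := by ring
    omega
  have hGauss : 2 * ∑ i ∈ Finset.Ico a (a + k + 2), (i + 1) = (k + 2) * (2 * a + k + 3) := by
    rw [Finset.sum_Ico_eq_sum_range]
    have hn : a + k + 2 - a = k + 2 := by omega
    rw [hn]
    have hsplit : ∑ j ∈ Finset.range (k + 2), (a + j + 1)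
        = (k + 2) * (a + 1) + ∑ j ∈ Finset.range (k + 2), j := by
      have : ∀ j ∈ Finset.range (k + 2), a + j + 1 = (a + 1) + j := fun j _ => by ring
      rw [Finset.sum_congr rfl this, Finset.sum_add_distrib, Finset.sum_const,
        Finset.card_range, smul_eq_mul]
    rw [hsplit]
    have h2 : (∑ j ∈ Finset.range (k + 2), j) * 2 = (k + 2) * (k + 1) := by
      have h := Finset.sum_range_id_mul_two (k + 2)
      simpa using h
    nlinarith [h2]
  -- Fact: m * q ≤ a + k + 1
  have hF3 : m * q ≤ a + k + 1 := by
    have h5 := Nat.div_mul_le_self (a + k + 2 - 1) m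
    have h4 : a + k + 2 - 1 = a + k + 1 := by omega
    rw [hqdef, h4]
    rw [h4] at h5
    calc m * ((a + k + 1) / m) = (a + k + 1) / m * m := Nat.mul_comm _ _
      _ ≤ a + k + 1 := h5
  -- final chain
  have c1 : 2 * (m * T) ≤ m * ((k + 2) * (a1 + a2)) := by
    have h := Nat.mul_le_mul_left m hF1
    have e : m * (2 * T) = 2 * (m * T) := by ring
    rw [← e]; exact h
  have c2 : m * ((k + 2) * (a1 + a2)) ≤ m * ((k + 2) * q) :=
    Nat.mul_le_mul_left m (Nat.mul_le_mul_left (k + 2) hq)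
  have c3 : m * ((k + 2) * q) = (k + 2) * (m * q) := by ring
  have c4 : (k + 2) * (m * q) ≤ (k + 2) * (a + k + 1) :=
    Nat.mul_le_mul_left (k + 2) hF3
  have c5 : (k + 2) * (a + k + 1) < (k + 2) * (2 * a + k + 3) :=
    mul_lt_mul_of_pos_left (by omega) (by omega)
  have c6 : (k + 2) * (2 * a + k + 3) ≤ 2 * (m * T) := by
    rw [← hGauss]
    omega
  omega
end

section
/- Let m ≥ 1 and a < b be natural numbers, S a finite set, and I : S → ℕ a function with I(s) ≤ b − a for all s ∈ S and Σ_{s∈S} I(s) = Σ_{i=a}^{b−1}(⌊i/m⌋ + 1). Then there exists a function I' : S → ℕ such that for every s ∈ S one has I'(s) ≤ I(s), I'(s) ≤ 2, and I(s) − I'(s) ≤ b − a − 1, and moreover Σ_{s∈S} I'(s) = ⌊(b−1)/m⌋ + 1. -/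
open Finset

lemma select_aux {α : Type*} (S : Finset α) : ∀ (L U : α → ℕ) (T : ℕ),
    (∀ s ∈ S, L s ≤ U s) → (∑ s ∈ S, L s) ≤ T → T ≤ ∑ s ∈ S, U s →
    ∃ f : α → ℕ, (∀ s ∈ S, L s ≤ f s ∧ f s ≤ U s) ∧ ∑ s ∈ S, f s = T := by
  classical
  induction S using Finset.induction with
  | empty =>
      intro L U T _ h1 h2
      simp only [Finset.sum_empty] at h1 h2
      exact ⟨fun _ => 0, by simp, by simp; omega⟩
  | insert x s hx ih =>
      intro L U T hLU h1 h2
      rw [Finset.sum_insert hx] at h1 h2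
      have hLx : L x ≤ U x := hLU x (mem_insert_self x s)
      have hLUs : (∑ t ∈ s, L t) ≤ ∑ t ∈ s, U t :=
        Finset.sum_le_sum fun t ht => hLU t (mem_insert_of_mem ht)
      set fx := min (U x) (T - ∑ t ∈ s, L t) with hfx
      have hmin1 : fx ≤ U x := min_le_left _ _
      have hmin2 : fx ≤ T - ∑ t ∈ s, L t := min_le_right _ _
      have hmin3 : fx = U x ∨ fx = T - ∑ t ∈ s, L t := min_choice _ _
      have h3 : (∑ t ∈ s, L t) ≤ T - fx := by omega
      have h4 : T - fx ≤ ∑ t ∈ s, U t := by omega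
      obtain ⟨g, hg1, hg2⟩ := ih L U (T - fx)
        (fun t ht => hLU t (mem_insert_of_mem ht)) h3 h4
      refine ⟨Function.update g x fx, ?_, ?_⟩
      · intro t ht
        rcases Finset.mem_insert.1 ht with rfl | ht
        · simp only [Function.update_self]
          omega
        · rw [Function.update_of_ne (ne_of_mem_of_not_mem ht hx)]
          exact hg1 t ht
      · rw [Finset.sum_insert hx, Function.update_self]
        have hsum' : (∑ t ∈ s, Function.update g x fx t) = ∑ t ∈ s, g t :=
          Finset.sum_congr rfl fun t ht => Function.update_of_ne (ne_of_mem_of_not_mem ht hx) _ _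
        rw [hsum', hg2]
        omega

/-- Tuple-selection lemma: if `I : S → ℕ` satisfies `I s ≤ b − a` on a finite set `S` and
`Σ_{s∈S} I s = Σ_{i=a}^{b−1} (⌊i/m⌋ + 1)`, then there is `I' : S → ℕ` with `I' s ≤ I s`,
`I' s ≤ 2` and `I s − I' s ≤ b − a − 1` for all `s ∈ S`, and `Σ_{s∈S} I' s = ⌊(b−1)/m⌋ + 1`. -/
theorem stmt_15 {α : Type*} (m a b : ℕ) (hm : 1 ≤ m) (hab : a < b)
    (S : Finset α) (I : α → ℕ)
    (hle : ∀ s ∈ S, I s ≤ b - a)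
    (hsum : ∑ s ∈ S, I s = ∑ i ∈ Finset.Ico a b, (i / m + 1)) :
    ∃ I' : α → ℕ,
      (∀ s ∈ S, I' s ≤ I s ∧ I' s ≤ 2 ∧ I s - I' s ≤ b - a - 1) ∧
      ∑ s ∈ S, I' s = (b - 1) / m + 1 := by
  classical
  set d := b - a with hd
  have hd1 : 1 ≤ d := by omega
  set T := (b - 1) / m + 1 with hT
  -- every term of the RHS sum is at most T
  have hsum_le : (∑ s ∈ S, I s) ≤ d * T := by
    rw [hsum]
    calc (∑ i ∈ Finset.Ico a b, (i / m + 1))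
        ≤ ∑ _i ∈ Finset.Ico a b, T := by
          refine Finset.sum_le_sum fun i hi => ?_
          have hi' := Finset.mem_Ico.1 hi
          have : i / m ≤ (b - 1) / m := Nat.div_le_div_right (by omega)
          omega
      _ = d * T := by rw [Finset.sum_const, Nat.card_Ico, smul_eq_mul]
  -- reflection pairing: 2 * Σ I ≥ d * T
  have hsum_ge : d * T ≤ 2 * ∑ s ∈ S, I s := by
    rw [hsum]
    have hre : (∑ i ∈ Finset.Ico a b, (i / m + 1))
        = ∑ j ∈ Finset.range d, ((a + j) / m + 1) := by
      rw [Finset.sum_Ico_eq_sum_range]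
    have hre2 : (∑ j ∈ Finset.range d, ((a + (d - 1 - j)) / m + 1))
        = ∑ j ∈ Finset.range d, ((a + j) / m + 1) :=
      Finset.sum_range_reflect (fun j => (a + j) / m + 1) d
    have key : ∀ j ∈ Finset.range d,
        T ≤ ((a + j) / m + 1) + ((a + (d - 1 - j)) / m + 1) := by
      intro j hj
      have hj' := Finset.mem_range.1 hj
      have hsum_idx : b - 1 ≤ (a + j) + (a + (d - 1 - j)) := by omega
      have h1 : (b - 1) / m ≤ ((a + j) + (a + (d - 1 - j))) / m :=
        Nat.div_le_div_right hsum_idx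
      have h2 : ((a + j) + (a + (d - 1 - j))) / m
          ≤ (a + j) / m + (a + (d - 1 - j)) / m + 1 := by
        rw [Nat.add_div (by omega : 0 < m)]
        have := Nat.mod_lt (a + j) (by omega : 0 < m)
        split_ifs <;> omega
      omega
    calc d * T = ∑ _j ∈ Finset.range d, T := by
          rw [Finset.sum_const, Finset.card_range, smul_eq_mul]
      _ ≤ ∑ j ∈ Finset.range d, (((a + j) / m + 1) + ((a + (d - 1 - j)) / m + 1)) :=
          Finset.sum_le_sum key
      _ = (∑ j ∈ Finset.range d, ((a + j) / m + 1))
          + ∑ j ∈ Finset.range d, ((a + (d - 1 - j)) / m + 1) := Finset.sum_add_distrib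
      _ = 2 * ∑ j ∈ Finset.range d, ((a + j) / m + 1) := by rw [hre2]; ring
      _ = 2 * ∑ i ∈ Finset.Ico a b, (i / m + 1) := by rw [hre]
  set Lo : α → ℕ := fun s => I s - (d - 1) with hLo
  set Up : α → ℕ := fun s => min (I s) 2 with hUp
  have hLoUp : ∀ s ∈ S, Lo s ≤ Up s := by
    intro s hs
    have := hle s hs
    simp only [hLo, hUp, le_min_iff]
    omega
  -- lower bound sum
  have hLoT : (∑ s ∈ S, Lo s) ≤ T := by
    have h : d * ∑ s ∈ S, Lo s ≤ ∑ s ∈ S, I s := by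
      rw [Finset.mul_sum]
      refine Finset.sum_le_sum fun s hs => ?_
      have hI := hle s hs
      rcases Nat.lt_or_ge (I s) d with h | h
      · have h0 : Lo s = 0 := by simp only [hLo]; omega
        rw [h0, Nat.mul_zero]
        exact Nat.zero_le _
      · have h1 : Lo s = 1 := by simp only [hLo]; omega
        rw [h1, Nat.mul_one]
        exact h
    have : d * ∑ s ∈ S, Lo s ≤ d * T := le_trans h hsum_le
    exact Nat.le_of_mul_le_mul_left this (by omega)
  -- upper bound sum
  have hUpT : T ≤ ∑ s ∈ S, Up s := by
    rcases Nat.lt_or_ge d 2 with hd2 | hd2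
    · -- d = 1
      have hdeq : d = 1 := by omega
      have hUeq : (∑ s ∈ S, Up s) = ∑ s ∈ S, I s := by
        refine Finset.sum_congr rfl fun s hs => ?_
        have := hle s hs
        simp only [hUp]
        omega
      have hb : b = a + 1 := by omega
      have hbm : (b - 1) / m = a / m := by rw [hb]; simp
      rw [hUeq, hsum, hb,
        show Finset.Ico a (a + 1) = {a} from by rw [Finset.Ico_add_one_right_eq_Icc, Finset.Icc_self],
        Finset.sum_singleton, hT, hbm]
    · have h : 2 * (∑ s ∈ S, I s) ≤ d * ∑ s ∈ S, Up s := by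
        rw [Finset.mul_sum, Finset.mul_sum]
        refine Finset.sum_le_sum fun s hs => ?_
        have hI := hle s hs
        simp only [hUp]
        rcases le_total (I s) 2 with h2 | h2
        · rw [min_eq_left h2]
          calc 2 * I s ≤ d * I s := Nat.mul_le_mul_right _ hd2
            _ = d * I s := rfl
        · rw [min_eq_right h2]
          calc 2 * I s ≤ 2 * d := Nat.mul_le_mul_left _ hI
            _ = d * 2 := by ring
      have : d * T ≤ d * ∑ s ∈ S, Up s := le_trans hsum_ge h
      exact Nat.le_of_mul_le_mul_left this (by omega)
  obtain ⟨f, hf1, hf2⟩ := select_aux S Lo Up T hLoUp hLoT hUpT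
  refine ⟨f, fun s hs => ?_, hf2⟩
  obtain ⟨hfl, hfu⟩ := hf1 s hs
  have := hle s hs
  simp only [hLo] at hfl
  simp only [hUp, le_min_iff] at hfu
  exact ⟨hfu.1, hfu.2, by omega⟩
end
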